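/- Let G be the group with presentation ⟨σ₁, σ₂ ∣ (σ₁σ₂)³ = (σ₂σ₁)³, (σ₁σ₂)³ = 1⟩ (the quotient of the braid group of type G₂ by its center) and let φ : G → K be a group homomorphism into a group K. If the three elements φ(σ₁), φ(σ₂σ₁σ₂⁻¹) and φ(σ₂σ₁σ₂σ₁σ₂⁻¹σ₁⁻¹σ₂⁻¹) of K freely generate a free subgroup of rank 3 (i.e., the group homomorphism from the free group on three generators sending the generators to these three elements is injective), then φ is injective. -/

import Mathlib

/-!
With `a = σ₁` and `s = σ₂`, write `b = s a s⁻¹` and `c = (s a s) a (s a s)⁻¹`, and let `H` be the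
image of the free group on `a, b, c`. Using `(a s)³ = 1`, conjugation by `s` maps `a ↦ b`, `b ↦ b⁻¹ c b`, `c ↦ b⁻¹ a b`, and
`s³ = (a c b)⁻¹ ∈ H`; hence `H` is normal and every element is `h sʳ` with `h ∈ H`, `0 ≤ r < 3`.
The hypothesis makes `φ` injective on `H`, so `H` is free on `a, b, c` and meets `ker φ` trivially.
If `φ (h sʳ) = 1`, the commutator of `h sʳ` with `a` lies in `H ∩ ker φ`, so `h sʳ` centralizes
`a`; but `sʳ a s⁻ʳ` is conjugate in `H` to the `r`-th free generator, and distinct free generators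
are not conjugate (look at the abelianization). Thus `r = 0` and `h ∈ H ∩ ker φ` is trivial.
-/

/-- Relators of the quotient of the braid group of type `G₂` by its center:
`(σ₁σ₂)³(σ₂σ₁)⁻³` and `(σ₁σ₂)³`. -/
def G2QuotRels : Set (FreeGroup (Fin 2)) :=
  { (FreeGroup.of 0 * FreeGroup.of 1) ^ 3 * ((FreeGroup.of 1 * FreeGroup.of 0) ^ 3)⁻¹,
    (FreeGroup.of 0 * FreeGroup.of 1) ^ 3 }

theorem FreeGroup.isConj_of_of_iff {α : Type*} {i j : α} :
    IsConj (FreeGroup.of i) (FreeGroup.of j) ↔ i = j := by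
  refine ⟨fun h => FreeAbelianGroup.of_injective ?_, fun h => h ▸ IsConj.refl _⟩
  exact congrArg Additive.ofMul (isConj_iff_eq.1 (Abelianization.of.map_isConj h))

theorem Subgroup.mem_normalizer_of_conj_mem_of_pow_mem {G : Type*} [Group G] {H : Subgroup G}
    {g : G} {n : ℕ} (hn : 0 < n) (hconj : ∀ h ∈ H, g * h * g⁻¹ ∈ H) (hpow : g ^ n ∈ H) :
    g ∈ Subgroup.normalizer (H : Set G) := by
  have hconj_pow : ∀ m : ℕ, ∀ h ∈ H, g ^ m * h * (g ^ m)⁻¹ ∈ H := by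
    intro m
    induction m with
    | zero => simp
    | succ m ih =>
      intro h hh
      simpa [pow_succ, mul_assoc] using ih _ (hconj h hh)
  obtain ⟨m, rfl⟩ := Nat.exists_eq_add_one_of_ne_zero hn.ne'
  refine Subgroup.mem_normalizer_iff.2 fun h => ⟨hconj h, fun hh => ?_⟩
  have h_eq : h = (g ^ (m + 1))⁻¹ * (g ^ m * (g * h * g⁻¹) * (g ^ m)⁻¹) * g ^ (m + 1) := by
    group
  rw [h_eq]
  exact mul_mem (mul_mem (inv_mem hpow) (hconj_pow m _ hh)) hpow

namespace G2BraidQuotient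

variable {G : Type*} [Group G] {a s : G}

def freeLift (a s : G) : FreeGroup (Fin 3) →* G :=
  FreeGroup.lift ![a, s * a * s⁻¹, s * a * s * a * s⁻¹ * a⁻¹ * s⁻¹]

@[simp]
theorem freeLift_of_zero : freeLift a s (FreeGroup.of 0) = a := FreeGroup.lift_apply_of

@[simp]
theorem freeLift_of_one : freeLift a s (FreeGroup.of 1) = s * a * s⁻¹ := FreeGroup.lift_apply_of

@[simp]
theorem freeLift_of_two :
    freeLift a s (FreeGroup.of 2) = s * a * s * a * s⁻¹ * a⁻¹ * s⁻¹ := FreeGroup.lift_apply_of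

variable (a s) in
theorem a_mem_range_freeLift : a ∈ (freeLift a s).range := ⟨FreeGroup.of 0, freeLift_of_zero⟩

theorem conj_pow_eq_freeLift (r : Fin 3) :
    ∃ u, s ^ (r : ℕ) * a * (s ^ (r : ℕ))⁻¹ = freeLift a s (u * FreeGroup.of r * u⁻¹) :=
  match r with
  | 0 => ⟨1, by simp⟩
  | 1 => ⟨1, by simp⟩
  | 2 => ⟨(FreeGroup.of 1)⁻¹, by
      show s ^ 2 * a * (s ^ 2)⁻¹ = _
      simp only [map_mul, map_inv, inv_inv, freeLift_of_one, freeLift_of_two, pow_two]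
      group⟩

theorem conj_freeLift_of_mem_range (hrel : (a * s) ^ 3 = 1) (i : Fin 3) :
    s * freeLift a s (FreeGroup.of i) * s⁻¹ ∈ (freeLift a s).range := by
  have hrel' : a * s * a * s * a * s = 1 := by simpa [pow_three, mul_assoc] using hrel
  have hasa : a * s * a = s⁻¹ * a⁻¹ * s⁻¹ := by
    rw [← mul_inv_eq_one, ← hrel']
    group
  have hsas : s * a * s = a⁻¹ * s⁻¹ * a⁻¹ := by
    simpa [mul_assoc] using (congrArg Inv.inv hasa).symm
  match i with
  | 0 => exact ⟨FreeGroup.of 1, by simp⟩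
  | 1 =>
    refine ⟨(FreeGroup.of 1)⁻¹ * FreeGroup.of 2 * FreeGroup.of 1, ?_⟩
    simp only [map_mul, map_inv, freeLift_of_one, freeLift_of_two]
    group
  | 2 =>
    refine ⟨(FreeGroup.of 1)⁻¹ * FreeGroup.of 0 * FreeGroup.of 1, ?_⟩
    calc freeLift a s ((FreeGroup.of 1)⁻¹ * FreeGroup.of 0 * FreeGroup.of 1)
        = s * a⁻¹ * s⁻¹ * (a * s * a) * s⁻¹ := by
          simp only [map_mul, map_inv, freeLift_of_zero, freeLift_of_one]; group
      _ = s * (s * a * s) * a * s⁻¹ * a⁻¹ * s⁻¹ * s⁻¹ := by rw [hasa, hsas]; group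
      _ = s * freeLift a s (FreeGroup.of 2) * s⁻¹ := by rw [freeLift_of_two]; group

theorem conj_mem_range (hrel : (a * s) ^ 3 = 1) {x : G} (hx : x ∈ (freeLift a s).range) :
    s * x * s⁻¹ ∈ (freeLift a s).range := by
  obtain ⟨w, rfl⟩ := hx
  induction w using FreeGroup.induction_on with
  | C1 => simp
  | of i => exact conj_freeLift_of_mem_range hrel i
  | inv_of i h => simpa [mul_assoc] using inv_mem h
  | mul x y hx hy => simpa [mul_assoc] using mul_mem hx hy

theorem pow_three_mem_range (hrel : (a * s) ^ 3 = 1) : s ^ 3 ∈ (freeLift a s).range := by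
  refine ⟨(FreeGroup.of 0 * FreeGroup.of 2 * FreeGroup.of 1)⁻¹, ?_⟩
  calc freeLift a s (FreeGroup.of 0 * FreeGroup.of 2 * FreeGroup.of 1)⁻¹
      = (a * s * (a * s * (a * s)) * (s ^ 3)⁻¹)⁻¹ := by
        simp only [map_inv, map_mul, freeLift_of_zero, freeLift_of_one, freeLift_of_two, pow_three]
        group
    _ = s ^ 3 := by rw [← pow_three, hrel]; group

theorem normal_range_freeLift (hrel : (a * s) ^ 3 = 1) (hgen : Subgroup.closure {a, s} = ⊤) :
    (freeLift a s).range.Normal := by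
  refine Subgroup.normalizer_eq_top_iff.1 (eq_top_iff.2 ?_)
  rw [← hgen, Subgroup.closure_le, Set.insert_subset_iff, Set.singleton_subset_iff]
  exact ⟨Subgroup.le_normalizer (a_mem_range_freeLift a s),
    Subgroup.mem_normalizer_of_conj_mem_of_pow_mem three_pos (fun _ => conj_mem_range hrel)
      (pow_three_mem_range hrel)⟩

theorem exists_eq_freeLift_mul_pow (hrel : (a * s) ^ 3 = 1) (hgen : Subgroup.closure {a, s} = ⊤)
    (g : G) : ∃ v : FreeGroup (Fin 3), ∃ r : Fin 3, g = freeLift a s v * s ^ (r : ℕ) := by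
  have := normal_range_freeLift hrel hgen
  have hg : g ∈ (freeLift a s).range ⊔ Subgroup.zpowers s := by
    refine (Subgroup.closure_le _).2 ?_ (hgen ▸ Subgroup.mem_top g)
    rw [Set.insert_subset_iff, Set.singleton_subset_iff]
    exact ⟨Subgroup.mem_sup_left (a_mem_range_freeLift a s),
      Subgroup.mem_sup_right (Subgroup.mem_zpowers s)⟩
  rw [← SetLike.mem_coe, Subgroup.normal_mul, Set.mem_mul] at hg
  obtain ⟨_, ⟨v, rfl⟩, _, ⟨n, rfl⟩, rfl⟩ := hg
  obtain ⟨w, hw⟩ := pow_three_mem_range hrel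
  refine ⟨v * w ^ (n / 3), ⟨(n % 3).toNat, by omega⟩, ?_⟩
  show _ * s ^ n = _
  rw [map_mul, map_zpow, hw, mul_assoc, ← zpow_natCast, ← zpow_mul, ← zpow_natCast, ← zpow_add]
  congr 2
  dsimp only
  omega

theorem injective_of_injective_comp_freeLift {K : Type*} [Group K] (hrel : (a * s) ^ 3 = 1)
    (hgen : Subgroup.closure {a, s} = ⊤) (φ : G →* K)
    (hfree : Function.Injective (φ.comp (freeLift a s))) : Function.Injective φ := by
  have hnormal := normal_range_freeLift hrel hgen
  have hker : ∀ h ∈ (freeLift a s).range, φ h = 1 → h = 1 := by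
    rintro _ ⟨v, rfl⟩ hv
    rw [hfree (show φ.comp (freeLift a s) v = φ.comp (freeLift a s) 1 by simpa using hv), map_one]
  refine (injective_iff_map_eq_one φ).2 fun g hg => ?_
  have hρ : Function.Injective (freeLift a s) := hfree.of_comp (f := φ)
  have ha := a_mem_range_freeLift a s
  have hcomm : g * a * g⁻¹ = a := by
    rw [← mul_inv_eq_one]
    exact hker _ (mul_mem (hnormal.conj_mem a ha g) (inv_mem ha)) (by simp [hg])
  obtain ⟨v, r, rfl⟩ := exists_eq_freeLift_mul_pow hrel hgen g
  obtain ⟨u, hu⟩ := conj_pow_eq_freeLift (a := a) (s := s) r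
  have hr : r = 0 := by
    rw [← FreeGroup.isConj_of_of_iff, isConj_iff]
    refine ⟨v * u, hρ ?_⟩
    calc freeLift a s (v * u * FreeGroup.of r * (v * u)⁻¹)
        = freeLift a s v * freeLift a s (u * FreeGroup.of r * u⁻¹) * (freeLift a s v)⁻¹ := by
          simp only [map_mul, map_inv]; group
      _ = freeLift a s v * s ^ (r : ℕ) * a * (freeLift a s v * s ^ (r : ℕ))⁻¹ := by
          rw [← hu]; group
      _ = freeLift a s (FreeGroup.of 0) := by rw [hcomm, freeLift_of_zero]
  subst hr
  simpa using hker _ ⟨v, rfl⟩ (by simpa using hg)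

end G2BraidQuotient

theorem stmt_2 {K : Type*} [Group K] (φ : PresentedGroup G2QuotRels →* K)
    (hfree : Function.Injective (FreeGroup.lift
      (![φ (PresentedGroup.of 0),
         φ (PresentedGroup.of 1 * PresentedGroup.of 0 * (PresentedGroup.of 1)⁻¹),
         φ (PresentedGroup.of 1 * PresentedGroup.of 0 * PresentedGroup.of 1 *
             PresentedGroup.of 0 * (PresentedGroup.of 1)⁻¹ * (PresentedGroup.of 0)⁻¹ *
             (PresentedGroup.of 1)⁻¹)] :
        Fin 3 → K))) :
    Function.Injective φ := by
  have hrel : (PresentedGroup.of 0 * PresentedGroup.of 1 : PresentedGroup G2QuotRels) ^ 3 = 1 :=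
    PresentedGroup.one_of_mem (Or.inr rfl)
  have hgen : Subgroup.closure {PresentedGroup.of 0, PresentedGroup.of 1} =
      (⊤ : Subgroup (PresentedGroup G2QuotRels)) := by
    rw [← PresentedGroup.closure_range_of]
    congr 1
    ext x
    simp [Fin.exists_fin_two, eq_comm]
  refine G2BraidQuotient.injective_of_injective_comp_freeLift hrel hgen φ ?_
  convert hfree using 2
  exact FreeGroup.ext_hom _ _ fun i => by fin_cases i <;> simp
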